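/- Consider the 6×6 Hermitian Hamiltonian of the three-layer pyramid: A = [[Δ₂, Ω₁, Ω₂],[conj(Ω₁), Δ₁, 0],[conj(Ω₂), 0, Δ₁]], B = [[0,0,0],[Ω₃,Ω₄,0],[0,Ω₅,Ω₆]], H = [[A,B],[B†,0]]. The vector (0,0,0, Ω₄Ω₆, −Ω₃Ω₆, Ω₃Ω₅) satisfies H v = 0; in particular if it is nonzero it is a dark state, independent of Δ₁, Δ₂, Ω₁, Ω₂. -/
import Mathlib


open Matrix

/-- For the three-layer pyramid Hamiltonian H = [[A,B],[B†,0]], the vector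
(0,0,0, Ω₄Ω₆, −Ω₃Ω₆, Ω₃Ω₅) is annihilated by H, independent of Δ₁, Δ₂, Ω₁, Ω₂. -/
theorem stmt_16 (Δ₁ Δ₂ : ℝ) (Ω₁ Ω₂ Ω₃ Ω₄ Ω₅ Ω₆ : ℂ) :
    (Matrix.fromBlocks
        !![(Δ₂ : ℂ), Ω₁, Ω₂; (starRingEnd ℂ) Ω₁, (Δ₁ : ℂ), 0;
           (starRingEnd ℂ) Ω₂, 0, (Δ₁ : ℂ)]
        !![(0 : ℂ), 0, 0; Ω₃, Ω₄, 0; 0, Ω₅, Ω₆]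
        (!![(0 : ℂ), 0, 0; Ω₃, Ω₄, 0; 0, Ω₅, Ω₆])ᴴ
        (0 : Matrix (Fin 3) (Fin 3) ℂ)).mulVec
      (Sum.elim (![0, 0, 0] : Fin 3 → ℂ) ![Ω₄ * Ω₆, -(Ω₃ * Ω₆), Ω₃ * Ω₅]) = 0 := by
  funext i
  cases i with
  | inl j =>
    fin_cases j <;>
      simp [Matrix.mulVec, dotProduct, Fin.sum_univ_succ, Matrix.fromBlocks] <;> ring
  | inr j =>
    fin_cases j <;>
      simp [Matrix.mulVec, dotProduct, Fin.sum_univ_succ, Matrix.fromBlocks]
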